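/- arXiv:2501.06147 — 2 statements merged into one kernel-verified Lean document; each statement's English description precedes it below -/
import Mathlib

section
/- Let s ≥ 0. There exists a constant C = C(s) > 0 such that for all ε ∈ (0,1], all t ≥ 0, all real N ≥ 1, and all finitely supported sequences a, b, c : ℤ → ℂ, the sequence G defined by G_k = Σ k·(k1+k2)·exp(−i·t·Q2(k,k1,k2,k3))/(Q1(k,k1+k2,k3)·Q2(k,k1,k2,k3))·a(k1)·b(k2)·c(k3), where the sum ranges over all (k1,k2,k3) ∈ Γ(k) with k1 ≠ 0, k2 ≠ 0, k3 ≠ 0, and where Q1(k,m,n) = 3k·m·n + iε(k² − m² − n²) (for k = m + n) and Q2(k,k1,k2,k3) = 3(k1+k2)(k1+k3)(k2+k3) + iε(k² − k1² − k2² − k3²), satisfies (Σ_{|k|>N} (1+k²)^s e^{−2tεk²} |G_k|²)^{1/2} ≤ C·N^{−1}·‖(e^{−tεk²}a_k)_{k∈ℤ}‖_{H^s}·‖(e^{−tεk²}b_k)_{k∈ℤ}‖_{H^s}·‖(e^{−tεk²}c_k)_{k∈ℤ}‖_{H^s}. -/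
/-!
The real parts give `|Q₁(k, k₁+k₂, k₃)| ≥ 3|k||k₁+k₂||k₃|` and `|Q₂| ≥ 3|(k₁+k₂)(k₁+k₃)(k₂+k₃)|`,
while `|e^{-itQ₂}| = e^{tε(k² - k₁² - k₂² - k₃²)}` is absorbed by the heat weights. Together with
`⟨k⟩^s ≤ 3^{s/2} ⟨k₁⟩^s ⟨k₂⟩^s ⟨k₃⟩^s` this bounds the weighted summand by
`3^{s/2}/9 · |k₃(k₁+k₂)(k₁+k₃)(k₂+k₃)|⁻¹` times the weighted coefficients. As `k = (k₁+k₂) + k₃`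
with both terms nonzero integers, `|k₁+k₂||k₃| ≥ |k|/2 > N/2`. Cauchy–Schwarz over the plane
`k₁+k₂+k₃ = k` then leaves the factor `(2/N)² (∑ₙ n⁻²)²` from the kernel, and the other factor,
summed over `k`, is the product of the three squared `H^s` norms.
-/

open scoped ENNReal

/-- The `H^s` norm of a sequence indexed by `ℤ`, with values in `[0,∞]`. -/
noncomputable def HsE (s : ℝ) (a : ℤ → ℝ≥0∞) : ℝ≥0∞ :=
  (∑' k : ℤ, ENNReal.ofReal ((1 + (k : ℝ) ^ 2) ^ s) * a k ^ 2) ^ (1 / 2 : ℝ)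

/-- `Q1(k, m, n) = 3 k m n + i ε (k² - m² - n²)`. -/
noncomputable def Q1 (ε : ℝ) (k m n : ℤ) : ℂ :=
  3 * (k : ℂ) * (m : ℂ) * (n : ℂ) +
    Complex.I * (ε : ℂ) * ((k : ℂ) ^ 2 - (m : ℂ) ^ 2 - (n : ℂ) ^ 2)

/-- `Q2(k, k1, k2, k3) = 3 (k1+k2)(k1+k3)(k2+k3) + i ε (k² - k1² - k2² - k3²)`. -/
noncomputable def Q2 (ε : ℝ) (k k1 k2 k3 : ℤ) : ℂ :=
  3 * ((k1 + k2 : ℤ) : ℂ) * ((k1 + k3 : ℤ) : ℂ) * ((k2 + k3 : ℤ) : ℂ) +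
    Complex.I * (ε : ℂ) * ((k : ℂ) ^ 2 - (k1 : ℂ) ^ 2 - (k2 : ℂ) ^ 2 - (k3 : ℂ) ^ 2)

open Complex

theorem ENNReal.tsum_mul_sq_le {ι : Type*} (f g : ι → ℝ≥0∞) :
    (∑' i, f i * g i) ^ 2 ≤ (∑' i, f i ^ 2) * ∑' i, g i ^ 2 := by
  let : MeasurableSpace ι := ⊤
  have hpq : Real.HolderConjugate 2 2 := .two_two
  have h := ENNReal.lintegral_mul_le_Lp_mul_Lq MeasureTheory.Measure.count hpq
    (Measurable.of_discrete (f := f)).aemeasurable (Measurable.of_discrete (f := g)).aemeasurable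
  simp only [MeasureTheory.lintegral_count, ENNReal.rpow_two, Pi.mul_apply] at h
  calc (∑' i, f i * g i) ^ 2
      ≤ ((∑' i, f i ^ 2) ^ (1 / 2 : ℝ) * (∑' i, g i ^ 2) ^ (1 / 2 : ℝ)) ^ 2 := by gcongr
    _ = (∑' i, f i ^ 2) * ∑' i, g i ^ 2 := by
      rw [mul_pow, ← ENNReal.rpow_two, ← ENNReal.rpow_two, ← ENNReal.rpow_mul, ← ENNReal.rpow_mul]
      norm_num

theorem ENNReal.tsum_tsum_mul_mul_sub_sub (u v w : ℤ → ℝ≥0∞) :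
    ∑' k : ℤ, ∑' q : ℤ × ℤ, u q.1 * v q.2 * w (k - q.1 - q.2)
      = (∑' m, u m) * (∑' m, v m) * ∑' m, w m := by
  rw [ENNReal.tsum_comm]
  have shift (q : ℤ × ℤ) : ∑' k : ℤ, w (k - q.1 - q.2) = ∑' m, w m := by
    simp_rw [sub_sub]
    exact (Equiv.subRight (q.1 + q.2)).tsum_eq w
  simp_rw [ENNReal.tsum_mul_left, shift]
  rw [ENNReal.tsum_mul_right, ENNReal.tsum_prod' (f := fun q => u q.1 * v q.2)]
  simp_rw [ENNReal.tsum_mul_left, ENNReal.tsum_mul_right]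

theorem ENNReal.sq_rpow_half (x : ℝ≥0∞) : (x ^ 2) ^ (1 / 2 : ℝ) = x := by
  simpa using ENNReal.pow_rpow_inv_natCast two_ne_zero x

theorem three_mul_abs_le_norm_Q1 (ε : ℝ) (k m n : ℤ) :
    3 * |(k : ℝ)| * |(m : ℝ)| * |(n : ℝ)| ≤ ‖Q1 ε k m n‖ := by
  have hre : (Q1 ε k m n).re = 3 * k * m * n := by simp [Q1, pow_two]
  calc 3 * |(k : ℝ)| * |(m : ℝ)| * |(n : ℝ)| = |(Q1 ε k m n).re| := by
        simp [hre, abs_mul]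
    _ ≤ ‖Q1 ε k m n‖ := abs_re_le_norm _

theorem three_mul_abs_le_norm_Q2 (ε : ℝ) (k k1 k2 k3 : ℤ) :
    3 * |((k1 + k2 : ℤ) : ℝ)| * |((k1 + k3 : ℤ) : ℝ)| * |((k2 + k3 : ℤ) : ℝ)|
      ≤ ‖Q2 ε k k1 k2 k3‖ := by
  have hre : (Q2 ε k k1 k2 k3).re = 3 * ((k1 + k2 : ℤ) : ℝ) * ((k1 + k3 : ℤ) : ℝ) * ((k2 + k3 : ℤ) : ℝ) := by
    simp [Q2, pow_two]
  calc _ = |(Q2 ε k k1 k2 k3).re| := by simp [hre, abs_mul]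
    _ ≤ ‖Q2 ε k k1 k2 k3‖ := abs_re_le_norm _

theorem norm_exp_Q2 (ε t : ℝ) (k k1 k2 k3 : ℤ) :
    ‖exp (-(I * t * Q2 ε k k1 k2 k3))‖
      = Real.exp (t * ε * ((k : ℝ) ^ 2 - (k1 : ℝ) ^ 2 - (k2 : ℝ) ^ 2 - (k3 : ℝ) ^ 2)) := by
  rw [norm_exp]
  congr 1
  simp [Q2, mul_re, mul_im, pow_two]
  ring

theorem one_add_sq_add_add_rpow_le {r : ℝ} (hr : 0 ≤ r) (x y z : ℝ) :
    (1 + (x + y + z) ^ 2) ^ r ≤ 3 ^ r * ((1 + x ^ 2) ^ r * (1 + y ^ 2) ^ r * (1 + z ^ 2) ^ r) := by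
  have hbase : 1 + (x + y + z) ^ 2 ≤ 3 * ((1 + x ^ 2) * (1 + y ^ 2) * (1 + z ^ 2)) := by
    nlinarith [sq_nonneg (x - y), sq_nonneg (x - z), sq_nonneg (y - z), sq_nonneg (x * y),
      sq_nonneg (x * z), sq_nonneg (y * z), sq_nonneg (x * y * z)]
  calc (1 + (x + y + z) ^ 2) ^ r ≤ (3 * ((1 + x ^ 2) * (1 + y ^ 2) * (1 + z ^ 2))) ^ r := by
        gcongr
    _ = _ := by
      rw [Real.mul_rpow (by norm_num) (by positivity), Real.mul_rpow (by positivity) (by positivity),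
        Real.mul_rpow (by positivity) (by positivity)]

noncomputable def weight (s t ε : ℝ) (k : ℤ) : ℝ :=
  (1 + (k : ℝ) ^ 2) ^ (s / 2) * Real.exp (-(t * ε * (k : ℝ) ^ 2))

theorem weight_nonneg (s t ε : ℝ) (k : ℤ) : 0 ≤ weight s t ε k := by
  unfold weight; positivity

theorem weight_mul_exp_le {s : ℝ} (hs : 0 ≤ s) (t ε : ℝ) (k1 k2 k3 : ℤ) :
    weight s t ε (k1 + k2 + k3) *
        Real.exp (t * ε * (((k1 + k2 + k3 : ℤ) : ℝ) ^ 2 - (k1 : ℝ) ^ 2 - (k2 : ℝ) ^ 2 - (k3 : ℝ) ^ 2))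
      ≤ 3 ^ (s / 2) * (weight s t ε k1 * weight s t ε k2 * weight s t ε k3) := by
  have hexp : Real.exp (-(t * ε * ((k1 : ℝ) + k2 + k3) ^ 2)) *
        Real.exp (t * ε * (((k1 : ℝ) + k2 + k3) ^ 2 - (k1 : ℝ) ^ 2 - (k2 : ℝ) ^ 2 - (k3 : ℝ) ^ 2))
      = Real.exp (-(t * ε * (k1 : ℝ) ^ 2)) * Real.exp (-(t * ε * (k2 : ℝ) ^ 2)) *
          Real.exp (-(t * ε * (k3 : ℝ) ^ 2)) := by
    simp only [← Real.exp_add]; ring_nf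
  simp only [weight, Int.cast_add]
  rw [mul_assoc, hexp]
  calc _ ≤ 3 ^ (s / 2) * ((1 + (k1 : ℝ) ^ 2) ^ (s / 2) * (1 + (k2 : ℝ) ^ 2) ^ (s / 2) *
        (1 + (k3 : ℝ) ^ 2) ^ (s / 2)) * (Real.exp (-(t * ε * (k1 : ℝ) ^ 2)) *
        Real.exp (-(t * ε * (k2 : ℝ) ^ 2)) * Real.exp (-(t * ε * (k3 : ℝ) ^ 2))) := by
        gcongr
        exact one_add_sq_add_add_rpow_le (div_nonneg hs zero_le_two) _ _ _
    _ = _ := by ring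

noncomputable def kernel (ε t : ℝ) (k k1 k2 k3 : ℤ) : ℂ :=
  (k : ℂ) * ((k1 + k2 : ℤ) : ℂ) * exp (-(I * (t : ℂ) * Q2 ε k k1 k2 k3)) /
    (Q1 ε k (k1 + k2) k3 * Q2 ε k k1 k2 k3)

/-- By `0⁻¹ = 0` this vanishes, rather than being infinite, when a factor is zero. -/
noncomputable def kernelMajorant (k1 k2 k3 : ℤ) : ℝ :=
  (|(k3 : ℝ)| * |((k1 + k2 : ℤ) : ℝ)| * |((k1 + k3 : ℤ) : ℝ)| * |((k2 + k3 : ℤ) : ℝ)|)⁻¹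

theorem kernelMajorant_nonneg (k1 k2 k3 : ℤ) : 0 ≤ kernelMajorant k1 k2 k3 := by
  unfold kernelMajorant; positivity

theorem norm_kernel_le (ε t : ℝ) {k k1 k2 k3 : ℤ} (hk : k ≠ 0)
    (hΓ : (k1 + k2) * (k1 + k3) * (k2 + k3) ≠ 0) (h3 : k3 ≠ 0) :
    ‖kernel ε t k k1 k2 k3‖ ≤
      Real.exp (t * ε * ((k : ℝ) ^ 2 - (k1 : ℝ) ^ 2 - (k2 : ℝ) ^ 2 - (k3 : ℝ) ^ 2)) / 9 *
        kernelMajorant k1 k2 k3 := by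
  simp only [mul_ne_zero_iff] at hΓ
  obtain ⟨⟨h12, h13⟩, h23⟩ := hΓ
  have hA : 0 < |(k : ℝ)| * |((k1 + k2 : ℤ) : ℝ)| := by positivity
  have hM : 0 < (kernelMajorant k1 k2 k3)⁻¹ := by
    rw [kernelMajorant, inv_inv]; positivity
  have hQ : 9 * (|(k : ℝ)| * |((k1 + k2 : ℤ) : ℝ)|) * (kernelMajorant k1 k2 k3)⁻¹
      ≤ ‖Q1 ε k (k1 + k2) k3 * Q2 ε k k1 k2 k3‖ := by
    rw [kernelMajorant, inv_inv, norm_mul]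
    calc _ = (3 * |(k : ℝ)| * |((k1 + k2 : ℤ) : ℝ)| * |(k3 : ℝ)|) *
          (3 * |((k1 + k2 : ℤ) : ℝ)| * |((k1 + k3 : ℤ) : ℝ)| * |((k2 + k3 : ℤ) : ℝ)|) := by ring
      _ ≤ _ := mul_le_mul (three_mul_abs_le_norm_Q1 ..) (three_mul_abs_le_norm_Q2 ..)
          (by positivity) (norm_nonneg _)
  rw [kernel, norm_div, norm_mul, norm_mul, norm_exp_Q2, Complex.norm_intCast,
    Complex.norm_intCast]
  calc _ ≤ _ / (9 * (|(k : ℝ)| * |((k1 + k2 : ℤ) : ℝ)|) * (kernelMajorant k1 k2 k3)⁻¹) :=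
        div_le_div_of_nonneg_left (by positivity) (by positivity) hQ
    _ = _ := by field_simp

theorem weight_mul_norm_kernel_le {s : ℝ} (hs : 0 ≤ s) (ε t : ℝ) {k1 k2 k3 : ℤ}
    (hk : k1 + k2 + k3 ≠ 0) (hΓ : (k1 + k2) * (k1 + k3) * (k2 + k3) ≠ 0) (h3 : k3 ≠ 0) :
    weight s t ε (k1 + k2 + k3) * ‖kernel ε t (k1 + k2 + k3) k1 k2 k3‖ ≤
      3 ^ (s / 2) / 9 * kernelMajorant k1 k2 k3 *
        (weight s t ε k1 * weight s t ε k2 * weight s t ε k3) := by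
  calc _ ≤ weight s t ε (k1 + k2 + k3) *
        (Real.exp (t * ε * (((k1 + k2 + k3 : ℤ) : ℝ) ^ 2 - (k1 : ℝ) ^ 2 - (k2 : ℝ) ^ 2 -
          (k3 : ℝ) ^ 2)) / 9 * kernelMajorant k1 k2 k3) := by
        gcongr
        · exact weight_nonneg ..
        · exact norm_kernel_le ε t hk hΓ h3
    _ = weight s t ε (k1 + k2 + k3) *
        Real.exp (t * ε * (((k1 + k2 + k3 : ℤ) : ℝ) ^ 2 - (k1 : ℝ) ^ 2 - (k2 : ℝ) ^ 2 -
          (k3 : ℝ) ^ 2)) / 9 * kernelMajorant k1 k2 k3 := by ring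
    _ ≤ 3 ^ (s / 2) * (weight s t ε k1 * weight s t ε k2 * weight s t ε k3) / 9 *
          kernelMajorant k1 k2 k3 := by
        gcongr ?_ / _ * _
        · exact kernelMajorant_nonneg ..
        · exact weight_mul_exp_le hs t ε k1 k2 k3
    _ = _ := by ring

noncomputable def Gsummand (ε t : ℝ) (a b c : ℤ → ℂ) (k : ℤ) (p : ℤ × ℤ × ℤ) : ℂ :=
  if p.1 + p.2.1 + p.2.2 = k ∧ (p.1 + p.2.1) * (p.1 + p.2.2) * (p.2.1 + p.2.2) ≠ 0 ∧
      p.1 ≠ 0 ∧ p.2.1 ≠ 0 ∧ p.2.2 ≠ 0 then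
    kernel ε t k p.1 p.2.1 p.2.2 * a p.1 * b p.2.1 * c p.2.2
  else 0

noncomputable def G (ε t : ℝ) (a b c : ℤ → ℂ) (k : ℤ) : ℂ :=
  ∑' p, Gsummand ε t a b c k p

theorem weight_mul_norm_Gsummand_le {s : ℝ} (hs : 0 ≤ s) (ε t : ℝ) (a b c : ℤ → ℂ) {k : ℤ}
    (hk : k ≠ 0) (p : ℤ × ℤ × ℤ) :
    weight s t ε k * ‖Gsummand ε t a b c k p‖ ≤
      3 ^ (s / 2) / 9 * kernelMajorant p.1 p.2.1 p.2.2 *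
        (weight s t ε p.1 * ‖a p.1‖ * (weight s t ε p.2.1 * ‖b p.2.1‖) *
          (weight s t ε p.2.2 * ‖c p.2.2‖)) := by
  unfold Gsummand
  split_ifs with h
  · obtain ⟨rfl, hΓ, -, -, h3⟩ := h
    calc _ = weight s t ε (p.1 + p.2.1 + p.2.2) * ‖kernel ε t _ p.1 p.2.1 p.2.2‖ *
          (‖a p.1‖ * ‖b p.2.1‖ * ‖c p.2.2‖) := by simp only [norm_mul]; ring
      _ ≤ 3 ^ (s / 2) / 9 * kernelMajorant p.1 p.2.1 p.2.2 *
          (weight s t ε p.1 * weight s t ε p.2.1 * weight s t ε p.2.2) *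
          (‖a p.1‖ * ‖b p.2.1‖ * ‖c p.2.2‖) := by
        gcongr ?_ * _
        exact weight_mul_norm_kernel_le hs ε t hk hΓ h3
      _ = _ := by ring
  · rw [norm_zero, mul_zero]
    unfold weight kernelMajorant
    positivity

def planeParam (k : ℤ) (q : ℤ × ℤ) : ℤ × ℤ × ℤ := (q.1, q.2, k - q.1 - q.2)

theorem planeParam_injective (k : ℤ) : Function.Injective (planeParam k) := by
  intro q q' h
  simp only [planeParam, Prod.mk.injEq] at h
  exact Prod.ext h.1 h.2.1

theorem G_eq_tsum_planeParam (ε t : ℝ) (a b c : ℤ → ℂ) (k : ℤ) :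
    G ε t a b c k = ∑' q, Gsummand ε t a b c k (planeParam k q) := by
  refine ((planeParam_injective k).tsum_eq fun p hp => ⟨(p.1, p.2.1), ?_⟩).symm
  have hsum : p.1 + p.2.1 + p.2.2 = k := by
    by_contra h
    exact hp (by simp [Gsummand, h])
  simp only [planeParam]
  ext <;> simp; omega

theorem inv_abs_mul_abs_le {N : ℝ} (hN : 0 < N) {m n : ℤ} (h : N < |((m + n : ℤ) : ℝ)|) :
    (|(m : ℝ)| * |(n : ℝ)|)⁻¹ ≤ 2 / N := by
  rcases eq_or_ne m 0 with rfl | hm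
  · simp; positivity
  rcases eq_or_ne n 0 with rfl | hn
  · simp; positivity
  have hm1 : (1 : ℝ) ≤ |(m : ℝ)| := by exact_mod_cast Int.one_le_abs hm
  have hn1 : (1 : ℝ) ≤ |(n : ℝ)| := by exact_mod_cast Int.one_le_abs hn
  have htri : |((m + n : ℤ) : ℝ)| ≤ |(m : ℝ)| + |(n : ℝ)| := by
    push_cast; exact abs_add_le _ _
  rw [inv_le_comm₀ (by positivity) (by positivity), inv_div]
  nlinarith

theorem kernelMajorant_planeParam_sq_le {N : ℝ} (hN : 0 < N) {k : ℤ} (hk : N < |(k : ℝ)|)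
    (q : ℤ × ℤ) :
    kernelMajorant q.1 q.2 (k - q.1 - q.2) ^ 2 ≤
      (2 / N) ^ 2 * ((((k - q.1 : ℤ) : ℝ)) ^ 2)⁻¹ * ((((k - q.2 : ℤ) : ℝ)) ^ 2)⁻¹ := by
  have h13 : q.1 + (k - q.1 - q.2) = k - q.2 := by ring
  have h23 : q.2 + (k - q.1 - q.2) = k - q.1 := by ring
  have hsplit := inv_abs_mul_abs_le hN (m := k - q.1 - q.2) (n := q.1 + q.2)
    (by rw [show k - q.1 - q.2 + (q.1 + q.2) = k by ring]; exact hk)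
  calc _ = (|((k - q.1 - q.2 : ℤ) : ℝ)| * |((q.1 + q.2 : ℤ) : ℝ)|)⁻¹ ^ 2 *
        ((((k - q.1 : ℤ) : ℝ)) ^ 2)⁻¹ * ((((k - q.2 : ℤ) : ℝ)) ^ 2)⁻¹ := by
        rw [kernelMajorant, h13, h23, ← sq_abs ((k - q.1 : ℤ) : ℝ), ← sq_abs ((k - q.2 : ℤ) : ℝ)]
        ring
    _ ≤ _ := by gcongr

theorem tsum_ofReal_kernelMajorant_sq_le {N : ℝ} (hN : 0 < N) {k : ℤ} (hk : N < |(k : ℝ)|) :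
    ∑' q : ℤ × ℤ, ENNReal.ofReal (kernelMajorant q.1 q.2 (k - q.1 - q.2)) ^ 2 ≤
      (ENNReal.ofReal (2 / N) * ∑' n : ℤ, ENNReal.ofReal (((n : ℝ) ^ 2)⁻¹)) ^ 2 := by
  calc _ ≤ ∑' q : ℤ × ℤ, ENNReal.ofReal (2 / N) ^ 2 *
        ENNReal.ofReal ((((k - q.1 : ℤ) : ℝ)) ^ 2)⁻¹ *
        ENNReal.ofReal ((((k - q.2 : ℤ) : ℝ)) ^ 2)⁻¹ := by
        refine ENNReal.tsum_le_tsum fun q => ?_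
        rw [← ENNReal.ofReal_pow (kernelMajorant_nonneg ..), ← ENNReal.ofReal_pow (by positivity),
          ← ENNReal.ofReal_mul (by positivity), ← ENNReal.ofReal_mul (by positivity)]
        exact ENNReal.ofReal_le_ofReal (kernelMajorant_planeParam_sq_le hN hk q)
    _ = _ := by
      rw [ENNReal.tsum_prod' (f := fun q : ℤ × ℤ => _ * _ * _)]
      simp_rw [ENNReal.tsum_mul_left, ENNReal.tsum_mul_right, ENNReal.tsum_mul_left]
      have shift : ∑' n : ℤ, ENNReal.ofReal ((((k - n : ℤ) : ℝ)) ^ 2)⁻¹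
          = ∑' n : ℤ, ENNReal.ofReal (((n : ℝ) ^ 2)⁻¹) :=
        (Equiv.subLeft k).tsum_eq fun n : ℤ => ENNReal.ofReal (((n : ℝ) ^ 2)⁻¹)
      rw [shift]
      ring

/-- The `n = 0` term of the sum is `0⁻¹ = 0`. -/
noncomputable def tailConstant (s : ℝ) : ℝ :=
  3 ^ (s / 2) / 9 * 2 * ∑' n : ℤ, ((n : ℝ) ^ 2)⁻¹

theorem summable_inv_int_sq : Summable fun n : ℤ => ((n : ℝ) ^ 2)⁻¹ := by
  simpa using (Real.summable_one_div_int_pow (p := 2)).2 one_lt_two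

theorem tailConstant_pos (s : ℝ) : 0 < tailConstant s := by
  have : 0 < ∑' n : ℤ, ((n : ℝ) ^ 2)⁻¹ :=
    summable_inv_int_sq.tsum_pos (fun n => by positivity) 1 (by norm_num)
  unfold tailConstant
  positivity

theorem ofReal_tailConstant_mul {s N : ℝ} (hN : 0 < N) :
    ENNReal.ofReal (tailConstant s) * ENNReal.ofReal N⁻¹ =
      ENNReal.ofReal (3 ^ (s / 2) / 9) * ENNReal.ofReal (2 / N) *
        ∑' n : ℤ, ENNReal.ofReal (((n : ℝ) ^ 2)⁻¹) := by
  rw [← ENNReal.ofReal_tsum_of_nonneg (fun n => by positivity) summable_inv_int_sq,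
    ← ENNReal.ofReal_mul (tailConstant_pos s).le, ← ENNReal.ofReal_mul (by positivity),
    ← ENNReal.ofReal_mul (by positivity), tailConstant]
  congr 1
  ring

noncomputable def weightedENorm (s t ε : ℝ) (a : ℤ → ℂ) (m : ℤ) : ℝ≥0∞ :=
  ENNReal.ofReal (weight s t ε m) * ‖a m‖ₑ

theorem ofReal_weight_mul_enorm_G_le {s : ℝ} (hs : 0 ≤ s) (ε t : ℝ) (a b c : ℤ → ℂ)
    {N : ℝ} (hN : 0 < N) {k : ℤ} (hk : N < |(k : ℝ)|) :
    ENNReal.ofReal (weight s t ε k) * ‖G ε t a b c k‖ₑ ≤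
      ENNReal.ofReal (3 ^ (s / 2) / 9) * ∑' q : ℤ × ℤ,
        ENNReal.ofReal (kernelMajorant q.1 q.2 (k - q.1 - q.2)) *
          (weightedENorm s t ε a q.1 * weightedENorm s t ε b q.2 *
            weightedENorm s t ε c (k - q.1 - q.2)) := by
  have hk0 : k ≠ 0 := by
    rintro rfl
    simp only [Int.cast_zero, abs_zero] at hk
    exact hk.not_gt hN
  rw [G_eq_tsum_planeParam, ← ENNReal.tsum_mul_left]
  calc _ ≤ ENNReal.ofReal (weight s t ε k) *
        ∑' q, ‖Gsummand ε t a b c k (planeParam k q)‖ₑ := by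
        gcongr
        exact enorm_tsum_le_tsum_enorm
    _ = ∑' q, ENNReal.ofReal (weight s t ε k * ‖Gsummand ε t a b c k (planeParam k q)‖) := by
        rw [← ENNReal.tsum_mul_left]
        simp_rw [ENNReal.ofReal_mul (weight_nonneg ..), ofReal_norm]
    _ ≤ _ := by
        refine ENNReal.tsum_le_tsum fun q => ?_
        have h3 : (0 : ℝ) ≤ 3 ^ (s / 2) / 9 := by positivity
        refine (ENNReal.ofReal_le_ofReal (weight_mul_norm_Gsummand_le hs ε t a b c hk0 _)).trans_eq ?_
        simp (maxDischargeDepth := 4) only [ENNReal.ofReal_mul, h3, mul_nonneg, weight_nonneg,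
          kernelMajorant_nonneg, norm_nonneg, ofReal_norm, weightedENorm, planeParam]
        ring

theorem ofReal_weight_mul_enorm_G_sq_le {s : ℝ} (hs : 0 ≤ s) (ε t : ℝ) (a b c : ℤ → ℂ)
    {N : ℝ} (hN : 0 < N) {k : ℤ} (hk : N < |(k : ℝ)|) :
    (ENNReal.ofReal (weight s t ε k) * ‖G ε t a b c k‖ₑ) ^ 2 ≤
      (ENNReal.ofReal (tailConstant s) * ENNReal.ofReal N⁻¹) ^ 2 *
        ∑' q : ℤ × ℤ, (weightedENorm s t ε a q.1 * weightedENorm s t ε b q.2 *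
          weightedENorm s t ε c (k - q.1 - q.2)) ^ 2 := by
  calc _ ≤ (ENNReal.ofReal (3 ^ (s / 2) / 9) * ∑' q : ℤ × ℤ,
        ENNReal.ofReal (kernelMajorant q.1 q.2 (k - q.1 - q.2)) *
          (weightedENorm s t ε a q.1 * weightedENorm s t ε b q.2 *
            weightedENorm s t ε c (k - q.1 - q.2))) ^ 2 := by
        gcongr ?_ ^ 2
        exact ofReal_weight_mul_enorm_G_le hs ε t a b c hN hk
    _ ≤ ENNReal.ofReal (3 ^ (s / 2) / 9) ^ 2 *
        ((ENNReal.ofReal (2 / N) * ∑' n : ℤ, ENNReal.ofReal (((n : ℝ) ^ 2)⁻¹)) ^ 2 *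
          ∑' q : ℤ × ℤ, (weightedENorm s t ε a q.1 * weightedENorm s t ε b q.2 *
            weightedENorm s t ε c (k - q.1 - q.2)) ^ 2) := by
        rw [mul_pow]
        gcongr
        exact (ENNReal.tsum_mul_sq_le _ _).trans
          (by gcongr; exact tsum_ofReal_kernelMajorant_sq_le hN hk)
    _ = _ := by rw [ofReal_tailConstant_mul hN]; ring

theorem ofReal_weight_sq (s t ε : ℝ) (k : ℤ) :
    ENNReal.ofReal (weight s t ε k) ^ 2 =
      ENNReal.ofReal ((1 + (k : ℝ) ^ 2) ^ s) *
        ENNReal.ofReal (Real.exp (-(2 * t * ε * (k : ℝ) ^ 2))) := by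
  have hexp : Real.exp (-(2 * t * ε * (k : ℝ) ^ 2)) = Real.exp (-(t * ε * (k : ℝ) ^ 2)) ^ 2 := by
    rw [← Real.exp_nat_mul]; ring_nf
  rw [weight, ← ENNReal.ofReal_pow (by positivity), mul_pow, hexp,
    ← Real.rpow_mul_natCast (by positivity), ENNReal.ofReal_mul (by positivity)]
  norm_num

theorem HsE_exp_mul_norm_sq (s t ε : ℝ) (a : ℤ → ℂ) :
    HsE s (fun k => ENNReal.ofReal (Real.exp (-(t * ε * (k : ℝ) ^ 2)) * ‖a k‖)) ^ 2 =
      ∑' k, weightedENorm s t ε a k ^ 2 := by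
  rw [HsE, show (1 / 2 : ℝ) = ((2 : ℕ) : ℝ)⁻¹ by norm_num, ENNReal.rpow_inv_natCast_pow two_ne_zero]
  refine tsum_congr fun k => ?_
  rw [weightedENorm, mul_pow, ofReal_weight_sq, ENNReal.ofReal_mul (by positivity), ofReal_norm,
    mul_pow, ← ENNReal.ofReal_pow (by positivity), ← Real.exp_nat_mul]
  ring_nf

theorem tsum_tail_le {s : ℝ} (hs : 0 ≤ s) (ε t : ℝ) {N : ℝ} (hN : 0 < N) (a b c : ℤ → ℂ) :
    ∑' k : ℤ, (if N < |(k : ℝ)| then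
        ENNReal.ofReal ((1 + (k : ℝ) ^ 2) ^ s) *
          ENNReal.ofReal (Real.exp (-(2 * t * ε * (k : ℝ) ^ 2))) *
          ENNReal.ofReal ‖G ε t a b c k‖ ^ 2
      else 0) ≤
    (ENNReal.ofReal (tailConstant s) * ENNReal.ofReal N⁻¹ *
      HsE s (fun k => ENNReal.ofReal (Real.exp (-(t * ε * (k : ℝ) ^ 2)) * ‖a k‖)) *
      HsE s (fun k => ENNReal.ofReal (Real.exp (-(t * ε * (k : ℝ) ^ 2)) * ‖b k‖)) *
      HsE s (fun k => ENNReal.ofReal (Real.exp (-(t * ε * (k : ℝ) ^ 2)) * ‖c k‖))) ^ 2 := by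
  calc _ ≤ ∑' k : ℤ, (ENNReal.ofReal (tailConstant s) * ENNReal.ofReal N⁻¹) ^ 2 *
        ∑' q : ℤ × ℤ, (weightedENorm s t ε a q.1 * weightedENorm s t ε b q.2 *
          weightedENorm s t ε c (k - q.1 - q.2)) ^ 2 := by
        refine ENNReal.tsum_le_tsum fun k => ?_
        split_ifs with hk
        · rw [← ofReal_weight_sq, ofReal_norm, ← mul_pow]
          exact ofReal_weight_mul_enorm_G_sq_le hs ε t a b c hN hk
        · exact zero_le
    _ = (ENNReal.ofReal (tailConstant s) * ENNReal.ofReal N⁻¹) ^ 2 *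
          ((∑' m, weightedENorm s t ε a m ^ 2) * (∑' m, weightedENorm s t ε b m ^ 2) *
            ∑' m, weightedENorm s t ε c m ^ 2) := by
        simp_rw [ENNReal.tsum_mul_left, mul_pow]
        rw [← ENNReal.tsum_tsum_mul_mul_sub_sub]
    _ = _ := by
        rw [← HsE_exp_mul_norm_sq, ← HsE_exp_mul_norm_sq, ← HsE_exp_mul_norm_sq]
        ring

theorem stmt11 (s : ℝ) (hs : 0 ≤ s) :
    ∃ C : ℝ, 0 < C ∧
      ∀ ε : ℝ, ε ∈ Set.Ioc (0 : ℝ) 1 → ∀ t : ℝ, 0 ≤ t → ∀ N : ℝ, 1 ≤ N →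
        ∀ a b c : ℤ → ℂ, (Function.support a).Finite → (Function.support b).Finite →
          (Function.support c).Finite →
          (∑' k : ℤ,
            if N < |(k : ℝ)| then
              ENNReal.ofReal ((1 + (k : ℝ) ^ 2) ^ s) *
                ENNReal.ofReal (Real.exp (-(2 * t * ε * (k : ℝ) ^ 2))) *
                ENNReal.ofReal (norm
                  (∑' p : ℤ × ℤ × ℤ,
                    if p.1 + p.2.1 + p.2.2 = k ∧
                       (p.1 + p.2.1) * (p.1 + p.2.2) * (p.2.1 + p.2.2) ≠ 0 ∧
                       p.1 ≠ 0 ∧ p.2.1 ≠ 0 ∧ p.2.2 ≠ 0 then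
                      (k : ℂ) * ((p.1 + p.2.1 : ℤ) : ℂ) *
                          Complex.exp (-(Complex.I * (t : ℂ) * Q2 ε k p.1 p.2.1 p.2.2)) /
                          (Q1 ε k (p.1 + p.2.1) p.2.2 * Q2 ε k p.1 p.2.1 p.2.2) *
                          a p.1 * b p.2.1 * c p.2.2
                    else 0)) ^ 2
            else 0) ^ (1 / 2 : ℝ)
          ≤ ENNReal.ofReal C * ENNReal.ofReal N⁻¹ *
              HsE s (fun k =>
                ENNReal.ofReal (Real.exp (-(t * ε * (k : ℝ) ^ 2)) * norm (a k))) *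
              HsE s (fun k =>
                ENNReal.ofReal (Real.exp (-(t * ε * (k : ℝ) ^ 2)) * norm (b k))) *
              HsE s (fun k =>
                ENNReal.ofReal (Real.exp (-(t * ε * (k : ℝ) ^ 2)) * norm (c k))) := by
  refine ⟨tailConstant s, tailConstant_pos s, fun ε _ t _ N hN a b c _ _ _ => ?_⟩
  -- the inner sum over `p` is `G ε t a b c k` after unfolding `G`, `Gsummand` and `kernel`
  calc _ ≤ _ := ENNReal.rpow_le_rpow (tsum_tail_le hs ε t (one_pos.trans_le hN) a b c)
        (by norm_num)
    _ = _ := ENNReal.sq_rpow_half _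
end

section
/- Let s ≥ 0. There exists a constant C = C(s) > 0 such that for all ε ∈ (0,1], all t ≥ 0, and all finitely supported sequences a, b, c : ℤ → ℂ, the sequence G defined by G_k = Σ k·(k1+k2)·exp(tε(k² − k1² − k2² − k3²))/Q1(k,k1+k2,k3)·a(k1)·b(k2)·c(k3), where the sum ranges over all (k1,k2,k3) ∈ Γ0(k) with k1 + k2 ≠ 0, k1 ≠ 0, k2 ≠ 0, k3 ≠ 0, and where Q1(k,m,n) = 3k·m·n + iε(k² − m² − n²) (for k = m + n), satisfies (Σ_{k∈ℤ} (1+k²)^s e^{−2tεk²} |G_k|²)^{1/2} ≤ C·‖(e^{−tεk²}a_k)_{k∈ℤ}‖_{H^s}·‖(e^{−tεk²}b_k)_{k∈ℤ}‖_{H^s}·‖(e^{−tεk²}c_k)_{k∈ℤ}‖_{H^s}. -/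
/-!
On the resonant set with `k₁ + k₂ ≠ 0`, either `k₁ + k₃ = 0` and `k₂ = k`, or `k₂ + k₃ = 0` and
`k₁ = k`. For `k = m + n` one has `Q1 ε k m n = m n (3k + 2iε)`, so the multiplier
`k (k₁ + k₂) / Q1` has modulus at most `1`, and the Gaussian factors recombine as
`e^{-τk²} e^{τ(k² - k₁² - k₂² - k₃²)} = e^{-τk₁²} e^{-τk₂²} e^{-τk₃²}` (with `τ = tε`).
Writing `A = e^{-τ·²}|a|` and similarly `B`, `C`, this gives the pointwise bound
`e^{-τk²}|G_k| ≤ B_k ∑ⱼ A_j C_{-j} + A_k ∑ⱼ B_j C_{-j}`. Cauchy–Schwarz and `ℓ² ≤ Hˢ` for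
`s ≥ 0` bound the two convolution sums, and Minkowski in `Hˢ` gives the estimate with `C = 2`.
-/

open scoped ENNReal

open MeasureTheory

section HsE

variable (s : ℝ)

lemma HsE_mono {f g : ℤ → ℝ≥0∞} (h : ∀ k, f k ≤ g k) : HsE s f ≤ HsE s g := by
  unfold HsE
  gcongr with k
  exact h k

lemma HsE_mul_const (f : ℤ → ℝ≥0∞) (x : ℝ≥0∞) : HsE s (fun k => f k * x) = HsE s f * x := by
  simp only [HsE, mul_pow, ← mul_assoc, ENNReal.tsum_mul_right]
  rw [ENNReal.mul_rpow_of_nonneg _ _ (by norm_num)]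
  congr 1
  simpa using ENNReal.pow_rpow_inv_natCast (n := 2) two_ne_zero x

lemma HsE_eq_lintegral (f : ℤ → ℝ≥0∞) :
    HsE s f = (∫⁻ k : ℤ, (ENNReal.ofReal ((1 + (k : ℝ) ^ 2) ^ s) ^ (1 / 2 : ℝ) * f k) ^ (2 : ℝ)
      ∂Measure.count) ^ (1 / 2 : ℝ) := by
  rw [lintegral_count, HsE]
  congr 1
  refine tsum_congr fun k => ?_
  rw [ENNReal.mul_rpow_of_nonneg _ _ zero_le_two, ← ENNReal.rpow_mul, ENNReal.rpow_two]
  norm_num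

lemma HsE_add_le (f g : ℤ → ℝ≥0∞) : HsE s (f + g) ≤ HsE s f + HsE s g := by
  simpa only [HsE_eq_lintegral, Pi.add_apply, mul_add, one_div] using
    ENNReal.lintegral_Lp_add_le (μ := Measure.count) (p := 2)
      (measurable_of_countable fun k => _ * f k).aemeasurable
      (measurable_of_countable fun k => _ * g k).aemeasurable one_le_two

lemma HsE_comp_neg (f : ℤ → ℝ≥0∞) : HsE s (fun k => f (-k)) = HsE s f := by
  simp only [HsE]
  congr 1
  conv_rhs => rw [← (Equiv.neg ℤ).tsum_eq]
  simp

end HsE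

lemma HsE_le_HsE_of_le {s s' : ℝ} (h : s ≤ s') (f : ℤ → ℝ≥0∞) : HsE s f ≤ HsE s' f := by
  unfold HsE
  gcongr with k
  exact le_add_of_nonneg_right (sq_nonneg _)

lemma tsum_mul_le_HsE_zero_mul (f g : ℤ → ℝ≥0∞) : ∑' k, f k * g k ≤ HsE 0 f * HsE 0 g := by
  have hpq : (2 : ℝ).HolderConjugate 2 := by rw [Real.holderConjugate_iff]; norm_num
  simpa [HsE, lintegral_count, ENNReal.rpow_two] using
    ENNReal.lintegral_mul_le_Lp_mul_Lq Measure.count hpq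
      (measurable_of_countable f).aemeasurable (measurable_of_countable g).aemeasurable

lemma tsum_mul_neg_le_HsE_mul {s : ℝ} (hs : 0 ≤ s) (f g : ℤ → ℝ≥0∞) :
    ∑' k, f k * g (-k) ≤ HsE s f * HsE s g :=
  calc ∑' k, f k * g (-k) ≤ HsE 0 f * HsE 0 (fun k => g (-k)) := tsum_mul_le_HsE_zero_mul f _
    _ = HsE 0 f * HsE 0 g := by rw [HsE_comp_neg]
    _ ≤ HsE s f * HsE s g := by gcongr <;> exact HsE_le_HsE_of_le hs _

lemma Q1_add (ε : ℝ) (m n : ℤ) :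
    Q1 ε (m + n) m n = m * n * (3 * ((m + n : ℤ) : ℂ) + 2 * ε * Complex.I) := by
  simp only [Q1]
  push_cast
  ring

lemma norm_mul_div_Q1_le_one (ε : ℝ) (m n : ℤ) :
    ‖((m + n : ℤ) : ℂ) * m / Q1 ε (m + n) m n‖ ≤ 1 := by
  rw [Q1_add]
  rcases eq_or_ne n 0 with rfl | hn
  · simp -- the denominator vanishes, and `x / 0 = 0`
  set k : ℂ := ((m + n : ℤ) : ℂ)
  set w : ℂ := 3 * k + 2 * ε * Complex.I
  have hkw : ‖k‖ ≤ ‖w‖ := by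
    have hre : w.re = 3 * (m + n : ℤ) := by simp [w, k]
    calc ‖k‖ = |((m + n : ℤ) : ℝ)| := Complex.norm_intCast _
      _ ≤ |w.re| := by
        rw [hre, abs_mul, abs_of_pos (three_pos : (0 : ℝ) < 3)]
        linarith [abs_nonneg ((m + n : ℤ) : ℝ)]
      _ ≤ ‖w‖ := Complex.abs_re_le_norm w
  have hn1 : 1 ≤ ‖(n : ℂ)‖ := by
    rw [Complex.norm_intCast]
    exact_mod_cast Int.one_le_abs hn
  rw [norm_div, norm_mul, norm_mul, norm_mul]
  apply div_le_one_of_le₀ _ (by positivity)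
  calc ‖k‖ * ‖(m : ℂ)‖ ≤ (‖(n : ℂ)‖ * ‖w‖) * ‖(m : ℂ)‖ := by
        gcongr
        nlinarith [norm_nonneg w]
    _ = ‖(m : ℂ)‖ * ‖(n : ℂ)‖ * ‖w‖ := by ring

noncomputable def dampedNorm (τ : ℝ) (a : ℤ → ℂ) (k : ℤ) : ℝ≥0∞ :=
  ENNReal.ofReal (Real.exp (-(τ * (k : ℝ) ^ 2)) * ‖a k‖)

/-- The summand of `G_k`, with `τ = t ε`. -/
noncomputable def resonantSummand (ε τ : ℝ) (a b c : ℤ → ℂ) (k : ℤ) (p : ℤ × ℤ × ℤ) : ℂ :=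
  if p.1 + p.2.1 + p.2.2 = k ∧ (p.1 + p.2.1) * (p.1 + p.2.2) * (p.2.1 + p.2.2) = 0 ∧
      p.1 + p.2.1 ≠ 0 ∧ p.1 ≠ 0 ∧ p.2.1 ≠ 0 ∧ p.2.2 ≠ 0 then
    (k : ℂ) * ((p.1 + p.2.1 : ℤ) : ℂ) *
        Complex.exp ((τ : ℂ) * ((k : ℂ) ^ 2 - (p.1 : ℂ) ^ 2 - (p.2.1 : ℂ) ^ 2 - (p.2.2 : ℂ) ^ 2)) /
        Q1 ε k (p.1 + p.2.1) p.2.2 * a p.1 * b p.2.1 * c p.2.2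
  else 0

lemma HsE_dampedNorm (s τ : ℝ) (g : ℤ → ℂ) :
    HsE s (dampedNorm τ g) = (∑' k : ℤ, ENNReal.ofReal ((1 + (k : ℝ) ^ 2) ^ s) *
      ENNReal.ofReal (Real.exp (-(2 * τ * (k : ℝ) ^ 2))) * ENNReal.ofReal ‖g k‖ ^ 2) ^ (1 / 2 : ℝ) := by
  simp only [HsE, dampedNorm]
  congr 1
  refine tsum_congr fun k => ?_
  rw [ENNReal.ofReal_mul (Real.exp_nonneg _), mul_pow, ← ENNReal.ofReal_pow (Real.exp_nonneg _),
    ← Real.exp_nat_mul, mul_assoc]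
  congr 4
  push_cast
  ring

lemma exp_mul_norm_resonant_term_le (ε τ : ℝ) {k k₁ k₂ k₃ : ℤ} (hk : k₁ + k₂ + k₃ = k)
    (x y z : ℂ) :
    Real.exp (-(τ * (k : ℝ) ^ 2)) *
        ‖(k : ℂ) * ((k₁ + k₂ : ℤ) : ℂ) *
          Complex.exp ((τ : ℂ) * ((k : ℂ) ^ 2 - (k₁ : ℂ) ^ 2 - (k₂ : ℂ) ^ 2 - (k₃ : ℂ) ^ 2)) /
          Q1 ε k (k₁ + k₂) k₃ * x * y * z‖ ≤
      Real.exp (-(τ * (k₁ : ℝ) ^ 2)) * ‖x‖ * (Real.exp (-(τ * (k₂ : ℝ) ^ 2)) * ‖y‖) *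
        (Real.exp (-(τ * (k₃ : ℝ) ^ 2)) * ‖z‖) := by
  subst hk
  set D : ℝ := (k₁ + k₂ + k₃ : ℤ) ^ 2 - (k₁ : ℝ) ^ 2 - (k₂ : ℝ) ^ 2 - (k₃ : ℝ) ^ 2
  have hexp : ‖Complex.exp ((τ : ℂ) * (((k₁ + k₂ + k₃ : ℤ) : ℂ) ^ 2 - (k₁ : ℂ) ^ 2 -
      (k₂ : ℂ) ^ 2 - (k₃ : ℂ) ^ 2))‖ = Real.exp (τ * D) := by
    rw [Complex.norm_exp]
    simp [D, sq]
  have hsplit : Real.exp (-(τ * ((k₁ + k₂ + k₃ : ℤ) : ℝ) ^ 2)) * Real.exp (τ * D) =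
      Real.exp (-(τ * (k₁ : ℝ) ^ 2)) * Real.exp (-(τ * (k₂ : ℝ) ^ 2)) *
        Real.exp (-(τ * (k₃ : ℝ) ^ 2)) := by
    simp only [← Real.exp_add, D]
    ring_nf
  have hregroup : ∀ A E Q : ℂ, A * E / Q * x * y * z = A / Q * E * (x * y * z) := by
    intros; ring
  rw [hregroup, norm_mul, norm_mul, hexp, norm_mul, norm_mul]
  calc _ ≤ Real.exp (-(τ * ((k₁ + k₂ + k₃ : ℤ) : ℝ) ^ 2)) *
        (1 * Real.exp (τ * D) * (‖x‖ * ‖y‖ * ‖z‖)) := by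
        gcongr
        exact norm_mul_div_Q1_le_one ε (k₁ + k₂) k₃
    _ = _ := by linear_combination (‖x‖ * ‖y‖ * ‖z‖) * hsplit

lemma ofReal_exp_mul_enorm_resonantSummand_le (ε τ : ℝ) (a b c : ℤ → ℂ) (k : ℤ)
    (p : ℤ × ℤ × ℤ) :
    ENNReal.ofReal (Real.exp (-(τ * (k : ℝ) ^ 2))) * ‖resonantSummand ε τ a b c k p‖ₑ ≤
      (Set.range fun j : ℤ => (j, k, -j)).indicator
          (fun q => dampedNorm τ a q.1 * dampedNorm τ b q.2.1 * dampedNorm τ c q.2.2) p +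
        (Set.range fun j : ℤ => (k, j, -j)).indicator
          (fun q => dampedNorm τ a q.1 * dampedNorm τ b q.2.1 * dampedNorm τ c q.2.2) p := by
  unfold resonantSummand
  split_ifs with h
  · obtain ⟨hk, hres, hm, -⟩ := h
    have hterm : ENNReal.ofReal (Real.exp (-(τ * (k : ℝ) ^ 2))) *
        ‖(k : ℂ) * ((p.1 + p.2.1 : ℤ) : ℂ) *
          Complex.exp ((τ : ℂ) * ((k : ℂ) ^ 2 - (p.1 : ℂ) ^ 2 - (p.2.1 : ℂ) ^ 2 - (p.2.2 : ℂ) ^ 2)) /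
          Q1 ε k (p.1 + p.2.1) p.2.2 * a p.1 * b p.2.1 * c p.2.2‖ₑ ≤
        dampedNorm τ a p.1 * dampedNorm τ b p.2.1 * dampedNorm τ c p.2.2 := by
      rw [← ofReal_norm, ← ENNReal.ofReal_mul (Real.exp_nonneg _), dampedNorm, dampedNorm,
        dampedNorm, ← ENNReal.ofReal_mul (by positivity), ← ENNReal.ofReal_mul (by positivity)]
      exact ENNReal.ofReal_le_ofReal (exp_mul_norm_resonant_term_le ε τ hk _ _ _)
    have hcases : p.1 + p.2.2 = 0 ∨ p.2.1 + p.2.2 = 0 := by simpa [hm] using hres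
    rcases hcases with h | h
    · rw [Set.indicator_of_mem (s := Set.range fun j : ℤ => (j, k, -j))
        ⟨p.1, by ext <;> simp <;> omega⟩]
      exact hterm.trans le_self_add
    · rw [Set.indicator_of_mem (s := Set.range fun j : ℤ => (k, j, -j))
        ⟨p.2.1, by ext <;> simp <;> omega⟩]
      exact hterm.trans le_add_self
  · simp

lemma dampedNorm_resonant_le (ε τ : ℝ) (a b c : ℤ → ℂ) (k : ℤ) :
    dampedNorm τ (fun k => ∑' p, resonantSummand ε τ a b c k p) k ≤
      dampedNorm τ b k * ∑' j, dampedNorm τ a j * dampedNorm τ c (-j) +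
        dampedNorm τ a k * ∑' j, dampedNorm τ b j * dampedNorm τ c (-j) := by
  set P : ℤ × ℤ × ℤ → ℝ≥0∞ := fun q =>
    dampedNorm τ a q.1 * dampedNorm τ b q.2.1 * dampedNorm τ c q.2.2
  set E : ℝ≥0∞ := ENNReal.ofReal (Real.exp (-(τ * (k : ℝ) ^ 2)))
  have inj₁ : Function.Injective fun j : ℤ => (j, k, -j) := fun i j h => congrArg Prod.fst h
  have inj₂ : Function.Injective fun j : ℤ => (k, j, -j) := fun i j h => congrArg (·.2.1) h
  calc dampedNorm τ (fun k => ∑' p, resonantSummand ε τ a b c k p) k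
      = E * ‖∑' p, resonantSummand ε τ a b c k p‖ₑ := by
        rw [dampedNorm, ENNReal.ofReal_mul (Real.exp_nonneg _), ofReal_norm]
    _ ≤ E * ∑' p, ‖resonantSummand ε τ a b c k p‖ₑ := by
        gcongr
        exact enorm_tsum_le_tsum_enorm
    _ = ∑' p, E * ‖resonantSummand ε τ a b c k p‖ₑ := ENNReal.tsum_mul_left.symm
    _ ≤ ∑' p, ((Set.range fun j : ℤ => (j, k, -j)).indicator P p +
          (Set.range fun j : ℤ => (k, j, -j)).indicator P p) :=
        ENNReal.tsum_le_tsum (ofReal_exp_mul_enorm_resonantSummand_le ε τ a b c k)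
    _ = ∑' j, P (j, k, -j) + ∑' j, P (k, j, -j) := by
        rw [ENNReal.tsum_add, ← tsum_subtype, ← tsum_subtype, tsum_range P inj₁,
          tsum_range P inj₂]
    _ = _ := by
        simp only [P, ← ENNReal.tsum_mul_left]
        congr 1 <;> exact tsum_congr fun j => by ring

theorem HsE_dampedNorm_resonant_le {s : ℝ} (hs : 0 ≤ s) (ε τ : ℝ) (a b c : ℤ → ℂ) :
    HsE s (dampedNorm τ fun k => ∑' p, resonantSummand ε τ a b c k p) ≤
      2 * HsE s (dampedNorm τ a) * HsE s (dampedNorm τ b) * HsE s (dampedNorm τ c) := by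
  set A := dampedNorm τ a
  set B := dampedNorm τ b
  set C := dampedNorm τ c
  calc HsE s (dampedNorm τ fun k => ∑' p, resonantSummand ε τ a b c k p)
      ≤ HsE s ((fun k => B k * ∑' j, A j * C (-j)) + fun k => A k * ∑' j, B j * C (-j)) :=
        HsE_mono s (dampedNorm_resonant_le ε τ a b c)
    _ ≤ HsE s B * ∑' j, A j * C (-j) + HsE s A * ∑' j, B j * C (-j) := by
        rw [← HsE_mul_const, ← HsE_mul_const]
        exact HsE_add_le s _ _
    _ ≤ HsE s B * (HsE s A * HsE s C) + HsE s A * (HsE s B * HsE s C) := by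
        gcongr <;> exact tsum_mul_neg_le_HsE_mul hs _ _
    _ = 2 * HsE s A * HsE s B * HsE s C := by ring

theorem stmt12 (s : ℝ) (hs : 0 ≤ s) :
    ∃ C : ℝ, 0 < C ∧
      ∀ ε : ℝ, ε ∈ Set.Ioc (0 : ℝ) 1 → ∀ t : ℝ, 0 ≤ t →
        ∀ a b c : ℤ → ℂ, (Function.support a).Finite → (Function.support b).Finite →
          (Function.support c).Finite →
          (∑' k : ℤ,
            ENNReal.ofReal ((1 + (k : ℝ) ^ 2) ^ s) *
              ENNReal.ofReal (Real.exp (-(2 * t * ε * (k : ℝ) ^ 2))) *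
              ENNReal.ofReal (norm
                (∑' p : ℤ × ℤ × ℤ,
                  if p.1 + p.2.1 + p.2.2 = k ∧
                     (p.1 + p.2.1) * (p.1 + p.2.2) * (p.2.1 + p.2.2) = 0 ∧
                     p.1 + p.2.1 ≠ 0 ∧ p.1 ≠ 0 ∧ p.2.1 ≠ 0 ∧ p.2.2 ≠ 0 then
                    (k : ℂ) * ((p.1 + p.2.1 : ℤ) : ℂ) *
                        Complex.exp (((t * ε : ℝ) : ℂ) *
                          ((k : ℂ) ^ 2 - (p.1 : ℂ) ^ 2 - (p.2.1 : ℂ) ^ 2 - (p.2.2 : ℂ) ^ 2)) /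
                        Q1 ε k (p.1 + p.2.1) p.2.2 * a p.1 * b p.2.1 * c p.2.2
                  else 0)) ^ 2) ^ (1 / 2 : ℝ)
          ≤ ENNReal.ofReal C *
              HsE s (fun k =>
                ENNReal.ofReal (Real.exp (-(t * ε * (k : ℝ) ^ 2)) * norm (a k))) *
              HsE s (fun k =>
                ENNReal.ofReal (Real.exp (-(t * ε * (k : ℝ) ^ 2)) * norm (b k))) *
              HsE s (fun k =>
                ENNReal.ofReal (Real.exp (-(t * ε * (k : ℝ) ^ 2)) * norm (c k))) := by
  refine ⟨2, two_pos, fun ε _ t _ a b c _ _ _ => ?_⟩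
  have hassoc : ∀ x : ℝ, 2 * t * ε * x = 2 * (t * ε) * x := fun x => by ring
  simp only [hassoc, ENNReal.ofReal_ofNat]
  rw [← HsE_dampedNorm]
  exact HsE_dampedNorm_resonant_le hs ε (t * ε) a b c
end
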